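/- arXiv:1503.05264 — 5 statements merged into one kernel-verified Lean document; each statement's English description precedes it below -/
import Mathlib

section
/- Let α, β, γ, δ be elements of ℤ^m each of squared length 2 (type 2), pairwise satisfying (β,γ) ≤ 0, (β,δ) ≤ 0, (γ,δ) ≤ 0, and suppose (β,α) = (γ,α) = (δ,α) = −1. Then some pair among {β, γ, δ} is conjugate, i.e., two of them are of the form b·e_j* + c·e_k* and b·e_j* − c·e_k* for some j ≠ k and signs b, c ∈ {±1}, and are linearly independent. -/
open Finset

/-- The standard scalar product on `ℤ^m`. -/
def dotZ {m : ℕ} (a b : Fin m → ℤ) : ℤ := ∑ i, a i * b i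

/-- Two type 2 elements of `ℤ^m` are conjugate if they are linearly independent and
of the form `b·e_j + c·e_k` and `b·e_j − c·e_k` for a common pair `j ≠ k` and
signs `b, c ∈ {±1}`. -/
def Conjugate {m : ℕ} (x y : Fin m → ℤ) : Prop :=
  LinearIndependent ℤ ![x, y] ∧
  ∃ j k : Fin m, j ≠ k ∧ ∃ b c : ℤ, (b = 1 ∨ b = -1) ∧ (c = 1 ∨ c = -1) ∧
    x = b • Pi.single j (1:ℤ) + c • Pi.single k (1:ℤ) ∧
    y = b • Pi.single j (1:ℤ) - c • Pi.single k (1:ℤ)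

/-!
A type 2 vector is `±e_p ± e_q`. If `x` and `α` are type 2 with `(x, α) = -1`, then `x` meets the
support `{p, q}` of `α` in exactly one coordinate `u`, where it carries the sign `-α_u`. By
pigeonhole two of `β, γ, δ` use the same `u`, so they agree there and their pairing is `1` plus
the product of their second coordinates; `(·, ·) ≤ 0` then forces the second coordinates to be the
same index with opposite signs, which is conjugacy.
-/

section TypeTwo

variable {m : ℕ}

lemma dotZ_smul_single_add_smul_single (b c : ℤ) (j k : Fin m) (y : Fin m → ℤ) :
    dotZ (b • Pi.single j 1 + c • Pi.single k 1) y = b * y j + c * y k := by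
  change (_ ⬝ᵥ _) = _
  simp only [add_dotProduct, smul_dotProduct, single_dotProduct, one_mul, smul_eq_mul]

lemma eq_neg_one_or_eq_zero_or_eq_one_of_dotZ_self_eq_two {x : Fin m → ℤ}
    (hx : dotZ x x = 2) (i : Fin m) : x i = -1 ∨ x i = 0 ∨ x i = 1 := by
  have : x i * x i ≤ 2 :=
    hx ▸ single_le_sum (f := fun i ↦ x i * x i) (fun i _ ↦ mul_self_nonneg _) (mem_univ i)
  have : x i ≤ 1 := by nlinarith
  have : -1 ≤ x i := by nlinarith
  omega

lemma exists_ne_forall_ne_zero_iff_of_dotZ_self_eq_two {x : Fin m → ℤ} (hx : dotZ x x = 2) :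
    ∃ j k, j ≠ k ∧ ∀ i, x i ≠ 0 ↔ i = j ∨ i = k := by
  have hsq (i : Fin m) : x i * x i = if x i ≠ 0 then 1 else 0 := by
    rcases eq_neg_one_or_eq_zero_or_eq_one_of_dotZ_self_eq_two hx i with h | h | h <;> simp [h]
  have hcard : #{i | x i ≠ 0} = 2 := by
    have := hx
    rw [dotZ, sum_congr rfl fun i _ ↦ hsq i, sum_boole] at this
    exact_mod_cast this
  obtain ⟨j, k, hjk, hsupp⟩ := card_eq_two.mp hcard
  refine ⟨j, k, hjk, fun i ↦ ?_⟩
  simpa using congrArg (i ∈ ·) hsupp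

lemma eq_smul_single_add_smul_single_of_dotZ_self_eq_two {x : Fin m → ℤ} (hx : dotZ x x = 2) :
    ∃ j k, j ≠ k ∧ (x j = 1 ∨ x j = -1) ∧ (x k = 1 ∨ x k = -1) ∧
      x = x j • Pi.single j 1 + x k • Pi.single k 1 := by
  obtain ⟨j, k, hjk, hsupp⟩ := exists_ne_forall_ne_zero_iff_of_dotZ_self_eq_two hx
  have hunit (i : Fin m) (hi : i = j ∨ i = k) : x i = 1 ∨ x i = -1 := by
    have := (hsupp i).2 hi
    rcases eq_neg_one_or_eq_zero_or_eq_one_of_dotZ_self_eq_two hx i with h | h | h <;> simp_all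
  refine ⟨j, k, hjk, hunit j (.inl rfl), hunit k (.inr rfl), funext fun i ↦ ?_⟩
  by_cases hij : i = j
  · subst hij; simp [hjk]
  by_cases hik : i = k
  · subst hik; simp [hij]
  · simpa [hij, hik] using (hsupp i).not.2 (by tauto)

lemma exists_eq_smul_single_add_smul_single_of_dotZ_eq_neg_one {x y : Fin m → ℤ}
    (hx : dotZ x x = 2) (hy : dotZ y y = 2) (hxy : dotZ x y = -1) :
    ∃ u v, v ≠ u ∧ ∃ s t : ℤ, y u = -s ∧ (s = 1 ∨ s = -1) ∧ (t = 1 ∨ t = -1) ∧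
      x = s • Pi.single u 1 + t • Pi.single v 1 := by
  obtain ⟨j, k, hjk, hj, hk, hxjk⟩ := eq_smul_single_add_smul_single_of_dotZ_self_eq_two hx
  rw [hxjk, dotZ_smul_single_add_smul_single] at hxy
  have hyj := eq_neg_one_or_eq_zero_or_eq_one_of_dotZ_self_eq_two hy j
  have hyk := eq_neg_one_or_eq_zero_or_eq_one_of_dotZ_self_eq_two hy k
  obtain hyj' | hyk' : y j = -x j ∨ y k = -x k := by
    rcases hj with h | h <;> rcases hk with h' | h' <;> rw [h, h'] at hxy ⊢ <;> omega
  · exact ⟨j, k, hjk.symm, x j, x k, hyj', hj, hk, hxjk⟩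
  · exact ⟨k, j, hjk, x k, x j, hyk', hk, hj, hxjk.trans (add_comm _ _)⟩

lemma conjugate_of_dotZ_nonpos {u v v' : Fin m} {s t t' : ℤ} (hs : s = 1 ∨ s = -1)
    (ht : t = 1 ∨ t = -1) (ht' : t' = 1 ∨ t' = -1) (hv : v ≠ u) (hv' : v' ≠ u)
    (hle : dotZ (s • Pi.single u 1 + t • Pi.single v 1)
      (s • Pi.single u 1 + t' • Pi.single v' 1) ≤ 0) :
    Conjugate (s • Pi.single u 1 + t • Pi.single v 1)
      (s • Pi.single u 1 + t' • Pi.single v' 1) := by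
  rw [dotZ_smul_single_add_smul_single] at hle
  simp only [Pi.add_apply, Pi.smul_apply, smul_eq_mul, Pi.single_eq_same, Pi.single_eq_of_ne hv,
    Pi.single_eq_of_ne hv'.symm, mul_one, mul_zero, zero_add, add_zero] at hle
  obtain rfl : v = v' := by
    by_contra h
    rw [Pi.single_eq_of_ne h, mul_zero, mul_zero, add_zero] at hle
    rcases hs with rfl | rfl <;> omega
  rw [Pi.single_eq_same, mul_one] at hle
  obtain rfl : t' = -t := by
    rcases hs with rfl | rfl <;> rcases ht with rfl | rfl <;> rcases ht' with rfl | rfl <;> omega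
  refine ⟨?_, u, v, hv.symm, s, t, hs, ht, rfl, by rw [neg_smul, sub_eq_add_neg]⟩
  rw [LinearIndependent.pair_iff]
  intro a b hab
  have hau := congrFun hab u
  have hav := congrFun hab v
  simp only [Pi.add_apply, Pi.smul_apply, Pi.zero_apply, smul_eq_mul, Pi.single_eq_same,
    Pi.single_eq_of_ne hv, Pi.single_eq_of_ne hv.symm, mul_one, mul_zero, add_zero, zero_add]
    at hau hav
  rcases hs with rfl | rfl <;> rcases ht with rfl | rfl <;> omega

end TypeTwo

/-- Lemma 2.2(1): if `β, γ, δ` are type 2 elements pairwise non-positively paired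
(simple roots), each pairing to `−1` with the type 2 element `α`, then some pair
among `{β, γ, δ}` is conjugate. -/
theorem stmt3 {m : ℕ} (α β γ δ : Fin m → ℤ)
    (hα : dotZ α α = 2) (hβ : dotZ β β = 2) (hγ : dotZ γ γ = 2) (hδ : dotZ δ δ = 2)
    (hβγ : dotZ β γ ≤ 0) (hβδ : dotZ β δ ≤ 0) (hγδ : dotZ γ δ ≤ 0)
    (h1 : dotZ β α = -1) (h2 : dotZ γ α = -1) (h3 : dotZ δ α = -1) :
    Conjugate β γ ∨ Conjugate β δ ∨ Conjugate γ δ := by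
  obtain ⟨p, q, -, hsupp⟩ := exists_ne_forall_ne_zero_iff_of_dotZ_self_eq_two hα
  obtain ⟨u₁, v₁, hv₁, s₁, t₁, hαu₁, hs₁, ht₁, rfl⟩ :=
    exists_eq_smul_single_add_smul_single_of_dotZ_eq_neg_one hβ hα h1
  obtain ⟨u₂, v₂, hv₂, s₂, t₂, hαu₂, hs₂, ht₂, rfl⟩ :=
    exists_eq_smul_single_add_smul_single_of_dotZ_eq_neg_one hγ hα h2
  obtain ⟨u₃, v₃, hv₃, s₃, t₃, hαu₃, hs₃, ht₃, rfl⟩ :=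
    exists_eq_smul_single_add_smul_single_of_dotZ_eq_neg_one hδ hα h3
  have hmem {u : Fin m} {s : ℤ} (hu : α u = -s) (hs : s = 1 ∨ s = -1) : u = p ∨ u = q :=
    (hsupp u).1 (by omega)
  obtain rfl | rfl | rfl : u₁ = u₂ ∨ u₁ = u₃ ∨ u₂ = u₃ := by
    have := hmem hαu₁ hs₁
    have := hmem hαu₂ hs₂
    have := hmem hαu₃ hs₃
    grind
  · obtain rfl : s₂ = s₁ := by omega
    exact .inl (conjugate_of_dotZ_nonpos hs₁ ht₁ ht₂ hv₁ hv₂ hβγ)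
  · obtain rfl : s₃ = s₁ := by omega
    exact .inr (.inl (conjugate_of_dotZ_nonpos hs₁ ht₁ ht₃ hv₁ hv₃ hβδ))
  · obtain rfl : s₃ = s₂ := by omega
    exact .inr (.inr (conjugate_of_dotZ_nonpos hs₂ ht₂ ht₃ hv₂ hv₃ hγδ))
end

section
/- For N = ℤ^n and V = {e_1, …, e_n, −(e_1 + ⋯ + e_n)}, R(V) = {±e_i* : 1 ≤ i ≤ n} ∪ {±(e_i* − e_j*) : 1 ≤ i < j ≤ n}, i.e., R(V) is the root system of type A_n. -/
/-!
Since `V` sums to zero, so do the pairings `⟨α, v⟩`, `v ∈ V`. This rules out type 1 and forces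
the two nonzero pairings of a type 2 element to be `1` and `-1`: the vector of pairings is
`e_i - e_j ∈ ℤ^{n+1}`. The first `n` pairings with `V = {e_1, …, e_n, -Σ e_j}` are the coordinates
of `α`, so `α` is `e_i - e_j` with its last coordinate dropped, i.e. `±e_i*` or `e_i* - e_j*`.
-/

open Finset

/-- The natural pairing of a functional `a ∈ N* = Hom(ℤ^n, ℤ)` (represented by its
coordinate vector) with `x ∈ N = ℤ^n`. -/
def pairZ {n : ℕ} (a x : Fin n → ℤ) : ℤ := ∑ j, a j * x j

/-- The bilinear form `(α,β) = Σ_i ⟨α,v_i⟩⟨β,v_i⟩` on `N*`. -/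
def formV {n m : ℕ} (v : Fin m → Fin n → ℤ) (a b : Fin n → ℤ) : ℤ :=
  ∑ i, pairZ a (v i) * pairZ b (v i)

/-- Type 1 element: `|⟨α,v_i⟩| = 1` for some `i` and `⟨α,v_k⟩ = 0` for `k ≠ i`. -/
def IsType1 {n m : ℕ} (v : Fin m → Fin n → ℤ) (a : Fin n → ℤ) : Prop :=
  ∃ i, (pairZ a (v i) = 1 ∨ pairZ a (v i) = -1) ∧ ∀ k, k ≠ i → pairZ a (v k) = 0

/-- Type 2 element: `|⟨α,v_i⟩| = |⟨α,v_j⟩| = 1` for some `i ≠ j` and `⟨α,v_k⟩ = 0`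
for `k ≠ i, j`. -/
def IsType2 {n m : ℕ} (v : Fin m → Fin n → ℤ) (a : Fin n → ℤ) : Prop :=
  ∃ i j, i ≠ j ∧ (pairZ a (v i) = 1 ∨ pairZ a (v i) = -1) ∧
    (pairZ a (v j) = 1 ∨ pairZ a (v j) = -1) ∧
    ∀ k, k ≠ i → k ≠ j → pairZ a (v k) = 0

/-- The root system `R(V)` associated to the finite set `V = {v_i}`. -/
def RV {n m : ℕ} (v : Fin m → Fin n → ℤ) : Set (Fin n → ℤ) :=
  {a | IsType1 v a ∨ IsType2 v a}

/-- `V = {e_1, …, e_n, −(e_1 + ⋯ + e_n)}` in `ℤ^n`. -/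
def vA (n : ℕ) : Fin (n + 1) → Fin n → ℤ := fun i =>
  if h : (i : ℕ) < n then Pi.single ⟨i, h⟩ 1 else fun _ => -1

section ZeroSum

variable {ι : Type*} [Fintype ι] {w : ι → ℤ}

lemma not_exists_sole_unit_of_sum_eq_zero (hw : ∑ i, w i = 0) :
    ¬ ∃ i, (w i = 1 ∨ w i = -1) ∧ ∀ k, k ≠ i → w k = 0 := by
  rintro ⟨i, hi, hk⟩
  rw [Finset.sum_eq_single_of_mem i (mem_univ i) fun k _ => hk k] at hw
  omega

lemma exists_two_units_iff_of_sum_eq_zero [DecidableEq ι] (hw : ∑ i, w i = 0) :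
    (∃ i j, i ≠ j ∧ (w i = 1 ∨ w i = -1) ∧ (w j = 1 ∨ w j = -1) ∧
      ∀ k, k ≠ i → k ≠ j → w k = 0) ↔
    ∃ i j, i ≠ j ∧ w = Pi.single i 1 - Pi.single j 1 := by
  constructor
  · rintro ⟨i, j, hij, hi, hj, hk⟩
    have hsum : w i + w j = 0 := by
      rwa [← Finset.sum_eq_add_of_mem i j (mem_univ i) (mem_univ j) hij
        fun k _ h => hk k h.1 h.2]
    have of_values : ∀ i j, i ≠ j → w i = 1 → w j = -1 →
        (∀ k, k ≠ i → k ≠ j → w k = 0) → w = Pi.single i 1 - Pi.single j 1 := by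
      intro i j hij hi hj hk
      ext k
      by_cases hki : k = i
      · subst hki; simp [hi, hij]
      by_cases hkj : k = j
      · subst hkj; simp [hj, hij.symm]
      simp [hk k hki hkj, hki, hkj]
    rcases hi with hi | hi
    · exact ⟨i, j, hij, of_values i j hij hi (by omega) hk⟩
    · exact ⟨j, i, hij.symm, of_values j i hij.symm (by omega) hi fun k h1 h2 => hk k h2 h1⟩
  · rintro ⟨i, j, hij, rfl⟩
    exact ⟨i, j, hij, by simp [hij], by simp [hij.symm], fun k hki hkj => by simp [hki, hkj]⟩

end ZeroSum

lemma sum_pairZ_eq_zero {n m : ℕ} {v : Fin m → Fin n → ℤ} (hv : ∑ i, v i = 0)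
    (a : Fin n → ℤ) : ∑ i, pairZ a (v i) = 0 := by
  simp_rw [pairZ, ← dotProduct.eq_1, ← dotProduct_sum, hv, dotProduct_zero]

lemma mem_RV_iff_of_sum_eq_zero {n m : ℕ} {v : Fin m → Fin n → ℤ} (hv : ∑ i, v i = 0)
    {a : Fin n → ℤ} :
    a ∈ RV v ↔ ∃ i j, i ≠ j ∧ (fun k => pairZ a (v k)) = Pi.single i 1 - Pi.single j 1 := by
  have hw := sum_pairZ_eq_zero hv a
  rw [← exists_two_units_iff_of_sum_eq_zero hw]
  exact or_iff_right (not_exists_sole_unit_of_sum_eq_zero hw)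

section

variable {n : ℕ} {M : Type*} [Zero M]

@[simp]
lemma Pi.single_castSucc_comp_castSucc (i : Fin n) (x : M) :
    Pi.single i.castSucc x ∘ Fin.castSucc = Pi.single i x := by
  ext k
  simp [Pi.single_apply]

@[simp]
lemma Pi.single_last_comp_castSucc (x : M) :
    Pi.single (Fin.last n) x ∘ Fin.castSucc = 0 := by
  ext k
  simp [(Fin.castSucc_lt_last k).ne]

end

lemma exists_single_or_single_sub_single_iff {n : ℕ} (a : Fin n → ℤ) :
    ((∃ i : Fin n, a = Pi.single i 1 ∨ a = Pi.single i (-1)) ∨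
      (∃ i j : Fin n, i ≠ j ∧ a = Pi.single i 1 - Pi.single j 1)) ↔
    ∃ i j : Fin (n + 1), i ≠ j ∧ a = (Pi.single i 1 - Pi.single j 1) ∘ Fin.castSucc := by
  constructor
  · rintro (⟨i, rfl | rfl⟩ | ⟨i, j, hij, rfl⟩)
    · exact ⟨i.castSucc, Fin.last n, (Fin.castSucc_lt_last i).ne, by simp [Pi.sub_comp]⟩
    · exact ⟨Fin.last n, i.castSucc, (Fin.castSucc_lt_last i).ne',
        by simp [Pi.sub_comp, Pi.single_neg]⟩
    · exact ⟨i.castSucc, j.castSucc, by simpa using hij, by simp [Pi.sub_comp]⟩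
  · rintro ⟨i, j, hij, rfl⟩
    induction i using Fin.lastCases <;> induction j using Fin.lastCases
    · contradiction
    case last.cast j => exact Or.inl ⟨j, Or.inr (by simp [Pi.sub_comp, Pi.single_neg])⟩
    case cast.last i => exact Or.inl ⟨i, Or.inl (by simp [Pi.sub_comp])⟩
    case cast.cast i j => exact Or.inr ⟨i, j, by simpa using hij, by simp [Pi.sub_comp]⟩

section

variable {n : ℕ}

lemma vA_castSucc (i : Fin n) : vA n i.castSucc = Pi.single i 1 := by
  simp [vA]

lemma vA_last : vA n (Fin.last n) = fun _ => -1 := by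
  simp [vA]

lemma sum_vA : ∑ i, vA n i = 0 := by
  ext j
  simp [Fin.sum_univ_castSucc, vA_castSucc, vA_last]

lemma pairZ_vA_castSucc (a : Fin n → ℤ) (i : Fin n) : pairZ a (vA n i.castSucc) = a i := by
  simp [pairZ, vA_castSucc, Pi.single_apply]

lemma pairZ_vA_last (a : Fin n → ℤ) : pairZ a (vA n (Fin.last n)) = -∑ j, a j := by
  simp [pairZ, vA_last]

lemma pairZ_vA_eq_iff {a : Fin n → ℤ} {w : Fin (n + 1) → ℤ} (hw : ∑ k, w k = 0) :
    (fun k => pairZ a (vA n k)) = w ↔ a = w ∘ Fin.castSucc := by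
  constructor
  · rintro rfl
    ext k
    simp [pairZ_vA_castSucc]
  · rintro rfl
    ext k
    induction k using Fin.lastCases with
    | cast k => simp [pairZ_vA_castSucc]
    | last =>
      rw [Fin.sum_univ_castSucc] at hw
      simp only [pairZ_vA_last, Function.comp_apply]
      omega

lemma mem_RV_vA_iff {a : Fin n → ℤ} :
    a ∈ RV (vA n) ↔
      ∃ i j : Fin (n + 1), i ≠ j ∧ a = (Pi.single i 1 - Pi.single j 1) ∘ Fin.castSucc := by
  rw [mem_RV_iff_of_sum_eq_zero sum_vA]
  exact exists₂_congr fun i j => and_congr_right fun _ =>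
    pairZ_vA_eq_iff (by simp [Finset.sum_sub_distrib])

end

/-- For `V = {e_1, …, e_n, −(e_1 + ⋯ + e_n)}`,
`R(V) = {±e_i*} ∪ {±(e_i* − e_j*) : i < j}`, the root system of type `A_n`. -/
theorem stmt10 {n : ℕ} (a : Fin n → ℤ) :
    a ∈ RV (vA n) ↔
      ((∃ i : Fin n, a = Pi.single i 1 ∨ a = Pi.single i (-1)) ∨
       (∃ i j : Fin n, i ≠ j ∧ a = Pi.single i (1:ℤ) - Pi.single j (1:ℤ))) :=
  mem_RV_vA_iff.trans (exists_single_or_single_sub_single_iff a).symm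
end

section
/- Let Φ be an irreducible root system inside R(V) (for V ⊆ N as above) of rank ≥ 2. If Φ contains a simple root of type 1 (squared length 1), then Φ is of type B. -/
open Finset

/-- `Φ` is a subsystem of the set of roots `S`: it is contained in `S` and closed
under the reflections `r_a(b) = b − (2(b,a)/(a,a))·a` in its own elements. -/
def IsRootSubsystem {n m : ℕ} (v : Fin m → Fin n → ℤ)
    (S Φ : Set (Fin n → ℤ)) : Prop :=
  Φ ⊆ S ∧ ∀ a ∈ Φ, ∀ b ∈ Φ, b - ((2 * formV v b a) / formV v a a) • a ∈ Φ

/-- `Δ` is a base (set of simple roots) of `Φ`: a linearly independent subset such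
that every root of `Φ` is a nonnegative or nonpositive integral combination of `Δ`. -/
def IsBase {n m : ℕ} (v : Fin m → Fin n → ℤ)
    (Φ : Set (Fin n → ℤ)) (Δ : Finset (Fin n → ℤ)) : Prop :=
  ↑Δ ⊆ Φ ∧
  LinearIndependent ℚ (fun a : Δ => (fun j => ((a : Fin n → ℤ) j : ℚ) : Fin n → ℚ)) ∧
  ∀ b ∈ Φ, (∃ c : (Fin n → ℤ) → ℕ, b = ∑ a ∈ Δ, (c a : ℤ) • a) ∨
    (∃ c : (Fin n → ℤ) → ℕ, b = -∑ a ∈ Δ, (c a : ℤ) • a)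

/-- `Φ` is irreducible: nonempty and not a union of two nonempty mutually
orthogonal parts. -/
def IsIrred {n m : ℕ} (v : Fin m → Fin n → ℤ) (Φ : Set (Fin n → ℤ)) : Prop :=
  Φ.Nonempty ∧ ∀ Φ₁ Φ₂ : Set (Fin n → ℤ), Φ = Φ₁ ∪ Φ₂ →
    (∀ a ∈ Φ₁, ∀ b ∈ Φ₂, formV v a b = 0) → Φ₁ = ∅ ∨ Φ₂ = ∅

/-- Gram matrix of the simple roots of `A_ℓ` (all roots of squared length 2,
simple roots forming a chain). -/
def gramA (ℓ : ℕ) (i j : Fin ℓ) : ℤ :=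
  if i = j then 2
  else if (i : ℕ) + 1 = j ∨ (j : ℕ) + 1 = i then -1 else 0

/-- Gram matrix of the simple roots of `B_ℓ` (chain with a short simple root of
squared length 1 at the end). -/
def gramB (ℓ : ℕ) (i j : Fin ℓ) : ℤ :=
  if i = j then (if (i : ℕ) = ℓ - 1 then 1 else 2)
  else if (i : ℕ) + 1 = j ∨ (j : ℕ) + 1 = i then -1 else 0

/-- Gram matrix of the simple roots of `D_ℓ` (chain `0, …, ℓ−2` with the extra node
`ℓ−1` attached to node `ℓ−3`). -/
def gramD (ℓ : ℕ) (i j : Fin ℓ) : ℤ :=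
  if i = j then 2
  else if ((i : ℕ) + 1 = j ∧ (j : ℕ) ≤ ℓ - 2) ∨ ((j : ℕ) + 1 = i ∧ (i : ℕ) ≤ ℓ - 2) ∨
      ((i : ℕ) = ℓ - 3 ∧ (j : ℕ) = ℓ - 1) ∨ ((j : ℕ) = ℓ - 3 ∧ (i : ℕ) = ℓ - 1) then -1
  else 0

/-- Gram matrix of the simple roots of `E_ℓ` (`ℓ = 6, 7, 8`): chain `0, …, ℓ−2`
with the extra node `ℓ−1` attached to node `2`. -/
def gramE (ℓ : ℕ) (i j : Fin ℓ) : ℤ :=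
  if i = j then 2
  else if ((i : ℕ) + 1 = j ∧ (j : ℕ) ≤ ℓ - 2) ∨ ((j : ℕ) + 1 = i ∧ (i : ℕ) ≤ ℓ - 2) ∨
      ((i : ℕ) = 2 ∧ (j : ℕ) = ℓ - 1) ∨ ((j : ℕ) = 2 ∧ (i : ℕ) = ℓ - 1) then -1
  else 0

/-- The set of simple roots `Δ` realizes the Gram matrix `g` under some
enumeration. -/
def MatchesGram {n m : ℕ} (v : Fin m → Fin n → ℤ) (Δ : Finset (Fin n → ℤ))
    (ℓ : ℕ) (g : Fin ℓ → Fin ℓ → ℤ) : Prop :=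
  ∃ e : Fin ℓ → Fin n → ℤ, Function.Injective e ∧ (∀ i, e i ∈ Δ) ∧
    (∀ a ∈ Δ, ∃ i, e i = a) ∧ ∀ i j, formV v (e i) (e j) = g i j

def IsTypeA {n m : ℕ} (v : Fin m → Fin n → ℤ) (Δ : Finset (Fin n → ℤ)) : Prop :=
  ∃ ℓ, MatchesGram v Δ ℓ (gramA ℓ)

def IsTypeB {n m : ℕ} (v : Fin m → Fin n → ℤ) (Δ : Finset (Fin n → ℤ)) : Prop :=
  ∃ ℓ, MatchesGram v Δ ℓ (gramB ℓ)

def IsTypeD {n m : ℕ} (v : Fin m → Fin n → ℤ) (Δ : Finset (Fin n → ℤ)) : Prop :=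
  ∃ ℓ, 4 ≤ ℓ ∧ MatchesGram v Δ ℓ (gramD ℓ)

def IsTypeE {n m : ℕ} (v : Fin m → Fin n → ℤ) (Δ : Finset (Fin n → ℤ)) : Prop :=
  ∃ ℓ, (ℓ = 6 ∨ ℓ = 7 ∨ ℓ = 8) ∧ MatchesGram v Δ ℓ (gramE ℓ)


/-!
The form `formV v` is the pullback of the dot product along `α ↦ (⟨α, v_i⟩)_i`, which is injective
because `V` has full rank, so it is a positive definite integral form in which every root has
squared length 1 or 2. Simple roots are pairwise obtuse, hence their Gram entries are `0` or `-1`.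
A splitting of `Δ` into two orthogonal parts would split `Φ`: a positive root whose support meets
both parts has positive pairing with some simple root `d` of the first part, and reflecting it in
`d` lowers its height while its support still meets both parts.

So the Dynkin graph of `Δ` is connected, and positive definiteness pins it down. Since
`(∑ Δ, ∑ Δ) ≥ 1`, some simple root `t` has `(t, ∑ Δ) = |t|² - deg t ≥ 1`; as `deg t ≥ 1`, `t` is
a long leaf.
By induction `Δ \ {t}`, which still contains the short root, is a `B`-chain, and `t` is attached
to its long end: attached to `e_j` with `j ≥ 1` it would make
`t + e_{j-1} + 2 (e_j + ⋯ + e_last)` isotropic (the affine diagram `B̃`).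
-/

lemma eq_zero_of_forall_dotProduct_eq_zero {n m : ℕ} {v : Fin m → Fin n → ℤ}
    (hv : Module.finrank ℤ (Submodule.span ℤ (Set.range v)) = n) {a : Fin n → ℤ}
    (ha : ∀ i, a ⬝ᵥ v i = 0) : a = 0 := by
  set K := Submodule.span ℤ (Set.range v)
  have haK : K ≤ LinearMap.ker (dotProductBilin ℤ ℤ a) :=
    Submodule.span_le.mpr (Set.range_subset_iff.mpr ha)
  -- otherwise `a` and a basis of `span V` are `n + 1` independent vectors in `ℤⁿ`
  by_contra ha0
  let b := Module.finBasisOfFinrankEq ℤ K hv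
  have hli : LinearIndependent ℤ (Fin.cons a fun i => (b i : Fin n → ℤ) : Fin (n + 1) → _) := by
    refine LinearIndependent.finCons' a _ (b.linearIndependent.map' K.subtype K.ker_subtype) ?_
    intro c y hy hcy
    have hyK : a ⬝ᵥ y = 0 :=
      haK (Submodule.span_le.mpr (Set.range_subset_iff.mpr fun i => (b i).2) hy)
    have := congrArg (a ⬝ᵥ ·) hcy
    simp only [dotProduct_add, dotProduct_smul, hyK, dotProduct_zero, smul_eq_mul,
      add_zero, mul_eq_zero, dotProduct_self_eq_zero] at this
    exact this.resolve_right ha0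
  simpa using hli.fintype_card_le_finrank

section FormV

variable {n m : ℕ} (v : Fin m → Fin n → ℤ)

lemma formV_eq_sum_dotProduct (a b : Fin n → ℤ) :
    formV v a b = ∑ i, (a ⬝ᵥ v i) * (b ⬝ᵥ v i) := rfl

def formVBilin : LinearMap.BilinForm ℤ (Fin n → ℤ) :=
  LinearMap.mk₂ ℤ (formV v)
    (fun a a' b => by
      simp only [formV_eq_sum_dotProduct, add_dotProduct, add_mul, sum_add_distrib])
    (fun c a b => by
      simp only [formV_eq_sum_dotProduct, smul_dotProduct, smul_eq_mul, mul_sum, mul_assoc])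
    (fun a b b' => by
      simp only [formV_eq_sum_dotProduct, add_dotProduct, mul_add, sum_add_distrib])
    (fun c a b => by
      simp only [formV_eq_sum_dotProduct, smul_dotProduct, smul_eq_mul, mul_sum, mul_left_comm])

lemma formVBilin_apply (a b : Fin n → ℤ) : formVBilin v a b = formV v a b := rfl

lemma formVBilin_isSymm : (formVBilin v).IsSymm :=
  ⟨fun a b => by simp only [formVBilin_apply, formV_eq_sum_dotProduct, mul_comm]⟩

lemma formVBilin_self_pos (hv : Module.finrank ℤ (Submodule.span ℤ (Set.range v)) = n)
    {a : Fin n → ℤ} (ha : a ≠ 0) : 0 < formVBilin v a a := by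
  obtain ⟨i, hi⟩ : ∃ i, a ⬝ᵥ v i ≠ 0 := by
    by_contra! h
    exact ha (eq_zero_of_forall_dotProduct_eq_zero hv h)
  rw [formVBilin_apply, formV_eq_sum_dotProduct]
  exact sum_pos' (fun i _ => mul_self_nonneg _) ⟨i, mem_univ i, mul_self_pos.mpr hi⟩

lemma formV_self_of_isType1 {a : Fin n → ℤ} (ha : IsType1 v a) : formV v a a = 1 := by
  obtain ⟨i, hi, hk⟩ := ha
  rw [formV, sum_eq_single i (fun k _ hki => by rw [hk k hki, zero_mul]) (by simp)]
  rcases hi with h | h <;> rw [h] <;> norm_num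

lemma formV_self_of_isType2 {a : Fin n → ℤ} (ha : IsType2 v a) : formV v a a = 2 := by
  obtain ⟨i, j, hij, hi, hj, hk⟩ := ha
  rw [formV, ← sum_subset (subset_univ {i, j}) fun k _ hk' => by
    simp only [mem_insert, mem_singleton, not_or] at hk'
    rw [hk k hk'.1 hk'.2, zero_mul], sum_pair hij]
  rcases hi with h | h <;> rcases hj with h' | h' <;> rw [h, h'] <;> norm_num

lemma formV_self_of_mem_RV {a : Fin n → ℤ} (ha : a ∈ RV v) :
    formV v a a = 1 ∨ formV v a a = 2 :=
  ha.imp (formV_self_of_isType1 v) (formV_self_of_isType2 v)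

end FormV

lemma linearIndepOn_int_of_linearIndependent_rat {n : ℕ} {Δ : Finset (Fin n → ℤ)}
    (h : LinearIndependent ℚ (fun a : Δ => (fun j => ((a : Fin n → ℤ) j : ℚ) : Fin n → ℚ))) :
    LinearIndepOn ℤ id (Δ : Set (Fin n → ℤ)) :=
  LinearIndependent.of_comp ((Int.castAddHom ℚ).toIntLinearMap.compLeft (Fin n))
    (h.restrict_scalars' ℤ)

section RootSystem

variable {M : Type*} [AddCommGroup M] {B : LinearMap.BilinForm ℤ M} {Φ : Set M} {Δ : Finset M}

lemma two_mul_ediv_mul_cancel {d : ℤ} (hd : d = 1 ∨ d = 2) (x : ℤ) : 2 * x / d * d = 2 * x :=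
  Int.ediv_mul_cancel (by rcases hd with rfl | rfl <;> simp)

lemma sum_sub_ite_smul [DecidableEq M] (p : M → ℤ) {d : M} (hd : d ∈ Δ) (t : ℤ) :
    ∑ a ∈ Δ, (p a - if a = d then t else 0) • a = ∑ a ∈ Δ, p a • a - t • d := by
  simp [sub_smul, sum_sub_distrib, ite_smul, hd]

lemma apply_sum_smul_left (B : LinearMap.BilinForm ℤ M) (s : Finset M) (r : M → ℤ) (y : M) :
    B (∑ a ∈ s, r a • a) y = ∑ a ∈ s, r a * B a y := by
  simp [map_sum]

lemma sum_smul_mem_span {T : Finset M} {p : M → ℤ} (hp : ∀ a ∈ Δ, a ∉ T → p a = 0) :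
    ∑ a ∈ Δ, p a • a ∈ Submodule.span ℤ (T : Set M) :=
  Submodule.sum_mem _ fun a ha => by
    by_cases haT : a ∈ T
    · exact Submodule.smul_mem _ _ (Submodule.subset_span haT)
    · rw [hp a ha haT, zero_smul]
      exact Submodule.zero_mem _

lemma apply_eq_zero_of_mem_span {S T : Set M} (horth : ∀ x ∈ S, ∀ y ∈ T, B x y = 0) {x y : M}
    (hx : x ∈ Submodule.span ℤ S) (hy : y ∈ Submodule.span ℤ T) : B x y = 0 := by
  have hxT : ∀ y ∈ T, B x y = 0 := fun y hy =>
    (Submodule.span_le (p := LinearMap.ker (B.flip y)).mpr fun x hx => horth x hx y hy) hx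
  exact (Submodule.span_le (p := LinearMap.ker (B x)).mpr hxT) hy

lemma sum_ne_zero_of_linearIndepOn {s : Finset M} (hli : LinearIndepOn ℤ id (s : Set M))
    (hs : s.Nonempty) :
    ∑ x ∈ s, x ≠ 0 := fun h0 =>
  one_ne_zero (linearIndepOn_finset_iff.mp hli (fun _ => 1) (by simpa using h0) _ hs.choose_spec)

/-- What is used of `IsRootSubsystem v (RV v) Φ` and `IsBase v Φ Δ`, for any integral form `B`. -/
structure IsRootSystemWithBase (B : LinearMap.BilinForm ℤ M) (Φ : Set M) (Δ : Finset M) :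
    Prop where
  norm_mem : ∀ a ∈ Φ, B a a = 1 ∨ B a a = 2
  reflect_mem : ∀ a ∈ Φ, ∀ b ∈ Φ, b - (2 * B b a / B a a) • a ∈ Φ
  base_subset : (Δ : Set M) ⊆ Φ
  linearIndepOn : LinearIndepOn ℤ id (Δ : Set M)
  sign : ∀ b ∈ Φ, (∃ c : M → ℕ, b = ∑ a ∈ Δ, (c a : ℤ) • a) ∨
    (∃ c : M → ℕ, b = -∑ a ∈ Δ, (c a : ℤ) • a)

namespace IsRootSystemWithBase

lemma coeff_sign (h : IsRootSystemWithBase B Φ Δ) {b : M} (hb : b ∈ Φ) {p : M → ℤ}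
    (hp : b = ∑ a ∈ Δ, p a • a) : (∀ a ∈ Δ, 0 ≤ p a) ∨ (∀ a ∈ Δ, p a ≤ 0) := by
  have huniq := linearIndepOn_finset_iffₛ.mp h.linearIndepOn p
  rcases h.sign b hb with ⟨c, hc⟩ | ⟨c, hc⟩
  · exact .inl fun a ha => huniq (fun a => c a) (hp.symm.trans hc) a ha ▸ Int.natCast_nonneg _
  · refine .inr fun a ha => huniq (fun a => -(c a : ℤ)) ?_ a ha ▸ by simp
    simp only [neg_smul, sum_neg_distrib, id]
    rw [← hp, hc]

lemma neg_mem (h : IsRootSystemWithBase B Φ Δ) {b : M} (hb : b ∈ Φ) : -b ∈ Φ := by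
  have hbb : 2 * B b b / B b b = 2 := by rcases h.norm_mem b hb with h1 | h1 <;> rw [h1] <;> rfl
  simpa [hbb, two_smul] using h.reflect_mem b hb b hb

lemma apply_nonpos (h : IsRootSystemWithBase B Φ Δ) (hB : B.IsSymm) {a b : M} (ha : a ∈ Δ)
    (hb : b ∈ Δ) (hab : a ≠ b) : B a b ≤ 0 := by
  classical
  by_contra! hpos
  have haa := h.norm_mem a (h.base_subset ha)
  set t := 2 * B b a / B a a
  have ht : t * B a a = 2 * B a b := hB.eq a b ▸ two_mul_ediv_mul_cancel haa _
  have hcoef : b - t • a = ∑ x ∈ Δ, ((if x = b then 1 else 0) - if x = a then t else 0) • x := by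
    rw [sum_sub_ite_smul _ ha]
    simp [ite_smul, hb]
  rcases h.coeff_sign (h.reflect_mem a (h.base_subset ha) b (h.base_subset hb)) hcoef with
    hs | hs
  · have := hs a ha
    simp only [if_neg hab, if_true, zero_sub, Left.nonneg_neg_iff] at this
    rcases haa with h1 | h1 <;> rw [h1] at ht <;> omega
  · simpa [Ne.symm hab] using hs b hb

end IsRootSystemWithBase

end RootSystem

section Indecomposable

variable {M : Type*} [AddCommGroup M] [DecidableEq M] {B : LinearMap.BilinForm ℤ M} {Φ : Set M}
  {Δ : Finset M}

/-- The Dynkin graph of `s`, with an edge wherever `B x y ≠ 0`, is connected. -/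
def IsIndecomposable (B : LinearMap.BilinForm ℤ M) (s : Finset M) : Prop :=
  ∀ S ⊆ s, S.Nonempty → (s \ S).Nonempty → ∃ x ∈ S, ∃ y ∈ s \ S, B x y ≠ 0

namespace IsRootSystemWithBase

lemma coeff_eq_zero_on_or_of_orthogonal (h : IsRootSystemWithBase B Φ Δ) (hB : B.IsSymm)
    (hpos : ∀ x, x ≠ 0 → 0 < B x x) {S : Finset M} (hS : S ⊆ Δ)
    (horth : ∀ x ∈ S, ∀ y ∈ Δ \ S, B x y = 0) {b : M} (hb : b ∈ Φ) {p : M → ℤ}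
    (hp : ∀ a ∈ Δ, 0 ≤ p a) (hbp : b = ∑ a ∈ Δ, p a • a) :
    (∀ a ∈ S, p a = 0) ∨ (∀ a ∈ Δ \ S, p a = 0) := by
  have hsplit : ∀ r : M → ℤ, ∀ d ∈ S, B (∑ a ∈ Δ, r a • a) d = ∑ a ∈ S, r a * B a d := by
    intro r d hd
    rw [apply_sum_smul_left, ← sum_sdiff hS, add_eq_right]
    exact sum_eq_zero fun a ha => by rw [hB.eq, horth d hd a ha, mul_zero]
  obtain ⟨N, hN⟩ : ∃ N, (∑ a ∈ S, p a).toNat = N := ⟨_, rfl⟩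
  induction N using Nat.strong_induction_on generalizing b p with
  | _ N ih =>
  by_contra! hmix
  obtain ⟨⟨s₀, hs₀, hps₀⟩, t₀, ht₀, hpt₀⟩ := hmix
  have ht₀Δ : t₀ ∈ Δ := (mem_sdiff.mp ht₀).1
  obtain ⟨d, hdS, hbd⟩ : ∃ d ∈ S, 0 < B b d := by
    have hx : ∑ a ∈ S, p a • a ≠ 0 := fun h0 =>
      hps₀ (linearIndepOn_finset_iff.mp (h.linearIndepOn.mono (coe_subset.mpr hS)) p h0 s₀ hs₀)
    have hxx := hpos _ hx
    rw [apply_sum_smul_left] at hxx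
    obtain ⟨d, hdS, hd⟩ := exists_lt_of_sum_lt (sum_const_zero.trans_lt hxx)
    refine ⟨d, hdS, ?_⟩
    rw [hbp, hsplit p d hdS, ← apply_sum_smul_left, hB.eq]
    exact pos_of_mul_pos_right hd (hp d (hS hdS))
  -- reflect `b` in `d`: its coefficient at `d` drops by `t ≥ 1`, those outside `S` are unchanged
  have hdd := h.norm_mem d (h.base_subset (hS hdS))
  set t := 2 * B b d / B d d
  have ht : t * B d d = 2 * B b d := two_mul_ediv_mul_cancel hdd _
  have ht1 : 1 ≤ t := by rcases hdd with h1 | h1 <;> rw [h1] at ht <;> omega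
  set q : M → ℤ := fun a => p a - if a = d then t else 0 with hq
  have hbq : b - t • d = ∑ a ∈ Δ, q a • a := by rw [sum_sub_ite_smul p (hS hdS), hbp]
  have hqt₀ : q t₀ = p t₀ := by
    simp [hq, show t₀ ≠ d from fun h => (mem_sdiff.mp ht₀).2 (h ▸ hdS)]
  have hb' : b - t • d ∈ Φ := h.reflect_mem d (h.base_subset (hS hdS)) b hb
  have hq_nonneg : ∀ a ∈ Δ, 0 ≤ q a := (h.coeff_sign hb' hbq).resolve_right fun hneg => by
    have := hneg t₀ ht₀Δ
    have := hp t₀ ht₀Δ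
    omega
  -- the `S`-part of `b - t d` is nonzero, else `(b - t d, d) = 0`; but it equals `-(b, d) < 0`
  have hqS : ∃ a ∈ S, q a ≠ 0 := by
    by_contra! hq0
    have h0 : B (b - t • d) d = 0 := by
      rw [hbq, hsplit q d hdS]
      exact sum_eq_zero fun a ha => by rw [hq0 a ha, zero_mul]
    simp only [map_sub, map_smul, LinearMap.sub_apply, LinearMap.smul_apply, smul_eq_mul] at h0
    linarith
  have hsum : ∑ a ∈ S, q a = ∑ a ∈ S, p a - t := by
    simp [hq, sum_sub_distrib, hdS]
  have hSnonneg : 0 ≤ ∑ a ∈ S, q a := sum_nonneg fun a ha => hq_nonneg a (hS ha)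
  rcases ih _ (by omega) hb' hq_nonneg hbq rfl with h1 | h1
  · obtain ⟨a, ha, hqa⟩ := hqS
    exact hqa (h1 a ha)
  · exact hpt₀ (hqt₀ ▸ h1 t₀ ht₀)

theorem isIndecomposable (h : IsRootSystemWithBase B Φ Δ) (hB : B.IsSymm)
    (hpos : ∀ x, x ≠ 0 → 0 < B x x)
    (hirr : ∀ Φ₁ Φ₂ : Set M, Φ = Φ₁ ∪ Φ₂ → (∀ a ∈ Φ₁, ∀ b ∈ Φ₂, B a b = 0) → Φ₁ = ∅ ∨ Φ₂ = ∅) :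
    IsIndecomposable B Δ := by
  intro S hS ⟨x, hx⟩ ⟨y, hy⟩
  by_contra! horth
  have hpos_span : ∀ b ∈ Φ, ∀ c : M → ℕ, b = ∑ a ∈ Δ, (c a : ℤ) • a →
      b ∈ Submodule.span ℤ (S : Set M) ∨ b ∈ Submodule.span ℤ ((Δ \ S : Finset M) : Set M) := by
    intro b hb c hbc
    rw [hbc]
    refine (h.coeff_eq_zero_on_or_of_orthogonal hB hpos hS horth hb
      (fun a _ => Int.natCast_nonneg (c a)) hbc).symm.imp
      (fun h0 => sum_smul_mem_span fun a ha haS => h0 a (mem_sdiff.mpr ⟨ha, haS⟩))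
      (fun h0 => sum_smul_mem_span fun a ha haS => h0 a (by simpa [ha] using haS))
  have hspan : ∀ b ∈ Φ,
      b ∈ Submodule.span ℤ (S : Set M) ∨ b ∈ Submodule.span ℤ ((Δ \ S : Finset M) : Set M) := by
    intro b hb
    rcases h.sign b hb with ⟨c, hc⟩ | ⟨c, hc⟩
    · exact hpos_span b hb c hc
    · simpa using hpos_span (-b) (h.neg_mem hb) c (by rw [hc, neg_neg])
  rcases hirr {b ∈ Φ | b ∈ Submodule.span ℤ (S : Set M)}
    {b ∈ Φ | b ∈ Submodule.span ℤ ((Δ \ S : Finset M) : Set M)}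
    (Set.ext fun b =>
      ⟨fun hb => (hspan b hb).imp (⟨hb, ·⟩) (⟨hb, ·⟩), fun hb => hb.elim (·.1) (·.1)⟩)
    (fun a ha b hb => apply_eq_zero_of_mem_span horth ha.2 hb.2) with h1 | h1
  · exact h1.subset ⟨h.base_subset (hS hx), Submodule.subset_span hx⟩
  · exact h1.subset ⟨h.base_subset (mem_sdiff.mp hy).1, Submodule.subset_span hy⟩

end IsRootSystemWithBase

end Indecomposable

lemma gramB_comm {L : ℕ} (i j : Fin L) : gramB L i j = gramB L j i := by
  unfold gramB
  split_ifs <;> simp_all [eq_comm, or_comm]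

lemma gramB_zero_zero {L : ℕ} : gramB (L + 2) 0 0 = 2 := by
  simp [gramB]

lemma gramB_zero_succ {L : ℕ} (k : Fin (L + 1)) :
    gramB (L + 2) 0 k.succ = if k = 0 then -1 else 0 := by
  simp only [gramB, (Fin.succ_ne_zero k).symm, if_false, Fin.val_zero, Fin.val_succ, Fin.ext_iff]
  split_ifs <;> simp_all

lemma gramB_succ_succ {L : ℕ} (i j : Fin L) : gramB (L + 1) i.succ j.succ = gramB L i j := by
  simp only [gramB, Fin.succ_inj, Fin.val_succ]
  split_ifs <;> omega

section GramB

variable {M : Type*} [AddCommGroup M] {B : LinearMap.BilinForm ℤ M}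

def IsGramB (B : LinearMap.BilinForm ℤ M) {L : ℕ} (e : Fin L → M) : Prop :=
  ∀ i j, B (e i) (e j) = gramB L i j

lemma IsGramB.tail {L : ℕ} {e : Fin (L + 1) → M} (he : IsGramB B e) : IsGramB B (Fin.tail e) :=
  fun i j => (he i.succ j.succ).trans (gramB_succ_succ i j)

lemma IsGramB.cons (hB : B.IsSymm) {L : ℕ} {e : Fin (L + 1) → M} (he : IsGramB B e) {t : M}
    (htt : B t t = 2) (hte : ∀ k, B t (e k) = if k = 0 then -1 else 0) :
    IsGramB B (Fin.cons t e : Fin (L + 2) → M) := by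
  intro i j
  cases i using Fin.cases <;> cases j using Fin.cases
  · simpa [gramB_zero_zero] using htt
  · simp [hte, gramB_zero_succ]
  · simp [hB.eq _ t, hte, gramB_comm _ 0, gramB_zero_succ]
  · simp [he _ _, gramB_succ_succ]

lemma IsGramB.apply_zero_sum {L : ℕ} {e : Fin (L + 1) → M} (he : IsGramB B e) :
    B (e 0) (∑ k, e k) = 1 := by
  cases L with
  | zero => simpa [gramB] using he 0 0
  | succ L =>
    simp only [Fin.sum_univ_succ, map_add, map_sum, he _ _, gramB_zero_zero, gramB_zero_succ,
      if_true]
    norm_num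

lemma IsGramB.apply_sum_sum (hB : B.IsSymm) {L : ℕ} {e : Fin (L + 1) → M} (he : IsGramB B e) :
    B (∑ k, e k) (∑ k, e k) = 1 := by
  induction L with
  | zero => simpa [gramB] using he 0 0
  | succ L ih =>
    have h0 := he.apply_zero_sum
    have h00 : B (e 0) (e 0) = 2 := (he 0 0).trans gramB_zero_zero
    have htail := ih he.tail
    rw [Fin.sum_univ_succ] at h0 ⊢
    simp only [Fin.tail] at htail
    simp only [map_add, LinearMap.add_apply, hB.eq (∑ k : Fin (L + 1), e k.succ) (e 0)] at h0 ⊢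
    linarith

lemma IsGramB.exists_isotropic_of_attach (hB : B.IsSymm) {L : ℕ} {e : Fin (L + 1) → M}
    (he : IsGramB B e) {t : M} (htt : B t t = 2) {j : Fin (L + 1)} (hj : j ≠ 0)
    (hte : ∀ k, B t (e k) = if k = j then -1 else 0) :
    ∃ y ∈ Submodule.span ℤ (Set.range e), B (t + y) (t + y) = 0 := by
  induction L with
  | zero => exact absurd (Fin.ext (by omega)) hj
  | succ L ih =>
    obtain ⟨j, rfl⟩ := Fin.exists_succ_eq.mpr hj
    by_cases hj0 : j = 0
    · -- `t, e 0, …, e (L + 1)` form an affine diagram of type `B̃`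
      subst hj0
      refine ⟨(2 : ℤ) • ∑ k, e k - e 0, ?_, ?_⟩
      · exact sub_mem (Submodule.smul_mem _ _ (Submodule.sum_mem _ fun k _ =>
          Submodule.subset_span (Set.mem_range_self k)))
          (Submodule.subset_span (Set.mem_range_self 0))
      have hS := he.apply_sum_sum hB
      have h0S := he.apply_zero_sum
      have h00 : B (e 0) (e 0) = 2 := (he 0 0).trans gramB_zero_zero
      have htS : B t (∑ k, e k) = -1 := by
        simp only [map_sum, hte]
        rw [sum_ite_eq']
        simp
      have ht0 : B t (e 0) = 0 := by simp [hte]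
      simp only [map_add, map_sub, map_smul, LinearMap.add_apply, LinearMap.sub_apply,
        LinearMap.smul_apply, smul_eq_mul, hB.eq _ t, hB.eq (∑ k, e k) (e 0)]
      linear_combination htt + 4 * hS + h00 + 4 * htS - 2 * ht0 - 4 * h0S
    · obtain ⟨y, hy, hty⟩ := ih he.tail hj0 fun k => by simpa [Fin.tail] using hte k.succ
      refine ⟨y, Submodule.span_mono ?_ hy, hty⟩
      rintro _ ⟨k, rfl⟩
      exact ⟨k.succ, rfl⟩

lemma IsGramB.attach_eq_zero (hB : B.IsSymm) (hpos : ∀ x, x ≠ 0 → 0 < B x x) {L : ℕ}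
    {e : Fin (L + 1) → M} (he : IsGramB B e) {t : M} (htt : B t t = 2)
    (ht : t ∉ Submodule.span ℤ (Set.range e)) {j : Fin (L + 1)}
    (hte : ∀ k, B t (e k) = if k = j then -1 else 0) : j = 0 := by
  by_contra hj
  obtain ⟨y, hy, hty⟩ := he.exists_isotropic_of_attach hB htt hj hte
  have hy0 : t + y = 0 := by
    by_contra h
    exact (hpos _ h).ne' hty
  exact ht (eq_neg_of_add_eq_zero_left hy0 ▸ Submodule.neg_mem _ hy)

lemma exists_isGramB_of_card_eq_one {s : Finset M} (hcard : s.card = 1)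
    (hshort : ∃ x ∈ s, B x x = 1) :
    ∃ e : Fin 1 → M, Function.Injective e ∧ Set.range e = s ∧ IsGramB B e := by
  obtain ⟨x, rfl⟩ := card_eq_one.mp hcard
  obtain ⟨_, hx, hxx⟩ := hshort
  rw [mem_singleton.mp hx] at hxx
  refine ⟨fun _ => x, fun i j _ => Subsingleton.elim i j, by simp, fun i j => ?_⟩
  simpa [Subsingleton.elim i 0, Subsingleton.elim j 0, gramB] using hxx

end GramB

section Classification

variable {M : Type*} [AddCommGroup M] [DecidableEq M] {B : LinearMap.BilinForm ℤ M}
  {s : Finset M}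

lemma notMem_span_erase (hli : LinearIndepOn ℤ id (s : Set M)) {x : M} (hx : x ∈ s) :
    x ∉ Submodule.span ℤ (s.erase x : Set M) := by
  simpa using hli.notMem_span hx

lemma apply_eq_zero_or_eq_neg_one (hB : B.IsSymm) (hpos : ∀ x, x ≠ 0 → 0 < B x x)
    (hli : LinearIndepOn ℤ id (s : Set M)) (hnorm : ∀ x ∈ s, B x x = 1 ∨ B x x = 2)
    (hobtuse : ∀ x ∈ s, ∀ y ∈ s, x ≠ y → B x y ≤ 0) {x y : M} (hx : x ∈ s) (hy : y ∈ s)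
    (hxy : x ≠ y) : B x y = 0 ∨ B x y = -1 := by
  have hxy0 : x + y ≠ 0 := by
    rw [← sum_pair (f := fun z => z) hxy]
    exact sum_ne_zero_of_linearIndepOn
      (hli.mono (coe_subset.mpr (insert_subset hx (singleton_subset_iff.mpr hy))))
      (insert_nonempty x {y})
  have := hpos _ hxy0
  simp only [map_add, LinearMap.add_apply, hB.eq y x] at this
  have := hobtuse x hx y hy hxy
  rcases hnorm x hx with h1 | h1 <;> rcases hnorm y hy with h2 | h2 <;> omega

lemma exists_long_leaf (hpos : ∀ x, x ≠ 0 → 0 < B x x) (hli : LinearIndepOn ℤ id (s : Set M))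
    (hnorm : ∀ x ∈ s, B x x = 1 ∨ B x x = 2)
    (hadj : ∀ x ∈ s, ∀ y ∈ s, x ≠ y → B x y = 0 ∨ B x y = -1) (hind : IsIndecomposable B s)
    (hcard : 2 ≤ s.card) :
    ∃ t ∈ s, B t t = 2 ∧ ∃ u ∈ s, u ≠ t ∧ B t u = -1 ∧ ∀ y ∈ s, y ≠ t → B t y ≠ 0 → y = u := by
  -- some `t` pairs positively with `∑ s`, so its diagonal entry beats its row sum
  obtain ⟨t, hts, ht⟩ : ∃ t ∈ s, 0 < B t (∑ x ∈ s, x) := by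
    have := hpos _ (sum_ne_zero_of_linearIndepOn hli (card_pos.mp (by omega)))
    rw [map_sum B, LinearMap.sum_apply] at this
    exact exists_lt_of_sum_lt (sum_const_zero.trans_lt this)
  obtain ⟨x, hx, u, hu, htu⟩ := hind {t} (singleton_subset_iff.mpr hts) (singleton_nonempty t)
    (card_pos.mp (by rw [card_sdiff_of_subset (singleton_subset_iff.mpr hts)]; simp; omega))
  rw [mem_singleton.mp hx] at htu
  obtain ⟨hus, hut⟩ : u ∈ s ∧ u ≠ t := by simpa [and_comm] using hu
  have htu' : B t u = -1 := (hadj t hts u hus hut.symm).resolve_left htu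
  have hrest : ∀ y ∈ (s.erase t).erase u, B t y ≤ 0 := fun y hy => by
    obtain ⟨hyu, hyt, hys⟩ : y ≠ u ∧ y ≠ t ∧ y ∈ s := by simpa using hy
    rcases hadj t hts y hys hyt.symm with h | h <;> omega
  rw [map_sum, ← add_sum_erase s _ hts, ← add_sum_erase _ _ (mem_erase.mpr ⟨hut, hus⟩), htu']
    at ht
  have hle := sum_nonpos hrest
  refine ⟨t, hts, ?_, u, hus, hut, htu', fun y hys hyt hty => ?_⟩
  · rcases hnorm t hts with h | h <;> omega
  · by_contra hyu
    have hzero := (sum_eq_zero_iff_of_nonpos hrest).mp (by rcases hnorm t hts with h | h <;> omega)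
    exact hty (hzero y (by simp [hyu, hyt, hys]))

lemma IsIndecomposable.erase_of_leaf (hB : B.IsSymm) (hind : IsIndecomposable B s) {t u : M}
    (hts : t ∈ s)
    (hleaf : ∀ y ∈ s, y ≠ t → B t y ≠ 0 → y = u) : IsIndecomposable B (s.erase t) := by
  intro S' hS' ⟨x, hx⟩ ⟨z, hz⟩
  have htS' : t ∉ S' := fun h => (mem_erase.mp (hS' h)).1 rfl
  obtain ⟨S, hS'S, hSS', htS⟩ : ∃ S, S' ⊆ S ∧ S ⊆ insert t S' ∧ (t ∈ S ↔ u ∈ S') := by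
    by_cases hu : u ∈ S'
    · exact ⟨insert t S', subset_insert _ _, subset_rfl, by simp [hu]⟩
    · exact ⟨S', subset_rfl, subset_insert _ _, by simp [hu, htS']⟩
  have hSs : S ⊆ s := hSS'.trans (insert_subset hts (hS'.trans (erase_subset t s)))
  obtain ⟨hz, hzS'⟩ := mem_sdiff.mp hz
  obtain ⟨x, hxS, y, hy, hxy⟩ := hind S hSs ⟨x, hS'S hx⟩ ⟨z, mem_sdiff.mpr
    ⟨mem_of_mem_erase hz, fun h => (mem_insert.mp (hSS' h)).elim (ne_of_mem_erase hz) hzS'⟩⟩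
  obtain ⟨hys, hyS⟩ := mem_sdiff.mp hy
  have hyt : y ≠ t := by
    intro hyt
    rw [hyt] at hyS hxy
    have hxt : x ≠ t := fun h => hyS (h ▸ hxS)
    have hxu := hleaf x (hSs hxS) hxt (by rwa [hB.eq])
    exact hyS (htS.mpr (hxu ▸ mem_of_mem_insert_of_ne (hSS' hxS) hxt))
  have hxt : x ≠ t := by
    intro hxt
    rw [hxt] at hxS hxy
    exact hyS (hS'S (hleaf y hys hyt hxy ▸ htS.mp hxS))
  exact ⟨x, mem_of_mem_insert_of_ne (hSS' hxS) hxt, y,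
    mem_sdiff.mpr ⟨mem_erase.mpr ⟨hyt, hys⟩, fun h => hyS (hS'S h)⟩, hxy⟩

theorem exists_isGramB_of_isIndecomposable (hB : B.IsSymm) (hpos : ∀ x, x ≠ 0 → 0 < B x x)
    (ℓ : ℕ) (s : Finset M) (hcard : s.card = ℓ) (hli : LinearIndepOn ℤ id (s : Set M))
    (hnorm : ∀ x ∈ s, B x x = 1 ∨ B x x = 2) (hobtuse : ∀ x ∈ s, ∀ y ∈ s, x ≠ y → B x y ≤ 0)
    (hshort : ∃ x ∈ s, B x x = 1) (hind : IsIndecomposable B s) :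
    ∃ e : Fin ℓ → M, Function.Injective e ∧ Set.range e = s ∧ IsGramB B e := by
  induction ℓ generalizing s with
  | zero =>
    obtain ⟨x, hx, -⟩ := hshort
    simp [card_eq_zero.mp hcard] at hx
  | succ ℓ ih =>
  cases ℓ with
  | zero => exact exists_isGramB_of_card_eq_one hcard hshort
  | succ ℓ =>
    obtain ⟨t, hts, htt, u, hus, hut, htu, hleaf⟩ := exists_long_leaf hpos hli hnorm
      (fun x hx y hy hxy => apply_eq_zero_or_eq_neg_one hB hpos hli hnorm hobtuse hx hy hxy) hind
      (by omega)
    obtain ⟨e, he_inj, he_range, he⟩ := ih (s.erase t) (by rw [card_erase_of_mem hts, hcard]; rfl)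
      (hli.mono (coe_subset.mpr (erase_subset t s)))
      (fun x hx => hnorm x (mem_of_mem_erase hx))
      (fun x hx y hy => hobtuse x (mem_of_mem_erase hx) y (mem_of_mem_erase hy))
      (by
        obtain ⟨x, hx, hxx⟩ := hshort
        exact ⟨x, mem_erase.mpr ⟨fun h => by rw [h, htt] at hxx; omega, hx⟩, hxx⟩)
      (hind.erase_of_leaf hB hts hleaf)
    have he_mem : ∀ k, e k ∈ s.erase t := fun k => by
      rw [← mem_coe, ← he_range]
      exact Set.mem_range_self k
    obtain ⟨j, rfl⟩ : ∃ j, e j = u := by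
      rw [← Set.mem_range, he_range]
      exact mem_erase.mpr ⟨hut, hus⟩
    have hte : ∀ k, B t (e k) = if k = j then -1 else 0 := fun k => by
      split_ifs with hk
      · rw [hk, htu]
      · by_contra h
        exact hk (he_inj (hleaf _ (mem_of_mem_erase (he_mem k)) (ne_of_mem_erase (he_mem k)) h))
    obtain rfl := he.attach_eq_zero hB hpos htt (he_range ▸ notMem_span_erase hli hts) hte
    refine ⟨Fin.cons t e, Fin.cons_injective_iff.mpr ⟨?_, he_inj⟩, ?_, he.cons hB htt hte⟩
    · rw [he_range]
      simp
    · rw [Fin.range_cons, he_range, coe_erase, Set.insert_sdiff_singleton,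
        Set.insert_eq_of_mem (mem_coe.mpr hts)]

end Classification

theorem stmt11_general {n m : ℕ} (v : Fin m → Fin n → ℤ)
    (hv : Module.finrank ℤ (Submodule.span ℤ (Set.range v)) = n)
    (Φ : Set (Fin n → ℤ)) (Δ : Finset (Fin n → ℤ))
    (hsub : IsRootSubsystem v (RV v) Φ) (hbase : IsBase v Φ Δ)
    (hirr : IsIrred v Φ)
    (hshort : ∃ a ∈ Δ, IsType1 v a) :
    IsTypeB v Δ := by
  have hB := formVBilin_isSymm v
  have hpos : ∀ a, a ≠ 0 → 0 < formVBilin v a a := fun a => formVBilin_self_pos v hv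
  have hroot : IsRootSystemWithBase (formVBilin v) Φ Δ :=
    ⟨fun a ha => formV_self_of_mem_RV v (hsub.1 ha), hsub.2, hbase.1,
      linearIndepOn_int_of_linearIndependent_rat hbase.2.1, hbase.2.2⟩
  obtain ⟨e, he_inj, he_range, he⟩ := exists_isGramB_of_isIndecomposable hB hpos Δ.card Δ rfl
    hroot.linearIndepOn (fun a ha => hroot.norm_mem a (hroot.base_subset ha))
    (fun a ha b hb => hroot.apply_nonpos hB ha hb)
    (hshort.imp fun a ⟨ha, h1⟩ => ⟨ha, formV_self_of_isType1 v h1⟩)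
    (hroot.isIndecomposable hB hpos hirr.2)
  refine ⟨Δ.card, e, he_inj, fun i => ?_, fun a ha => ?_, he⟩
  · exact mem_coe.mp (he_range ▸ Set.mem_range_self i)
  · exact (he_range.symm ▸ mem_coe.mpr ha : a ∈ Set.range e)

/-- An irreducible subsystem of `R(V)` of rank ≥ 2 containing a simple root of
type 1 is of type B. -/
theorem stmt11 {n m : ℕ} (v : Fin m → Fin n → ℤ)
    (hv : Module.finrank ℤ (Submodule.span ℤ (Set.range v)) = n)
    (Φ : Set (Fin n → ℤ)) (Δ : Finset (Fin n → ℤ))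
    (hsub : IsRootSubsystem v (RV v) Φ) (hbase : IsBase v Φ Δ)
    (hirr : IsIrred v Φ) (hrank : 2 ≤ Δ.card)
    (hshort : ∃ a ∈ Δ, IsType1 v a) :
    IsTypeB v Δ :=
  stmt11_general v hv Φ Δ hsub hbase hirr hshort
end

section
/- Let Φ be an irreducible root system inside R(V) in which every simple root is of type 2 (squared length 2). Then Φ is not of type E (E_6, E_7, E_8). -/
open Finset

/-!
A type 2 root has exactly two nonzero coordinates `⟨α, v_p⟩, ⟨α, v_q⟩ ∈ {±1}`. A type 2 root `β`
with `(α, β) = -1` must take the value `-⟨α, v_p⟩` at `p` or `-⟨α, v_q⟩` at `q`, so among three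
neighbours of `α` two, `β` and `γ`, agree in a common nonzero coordinate. If they are also
orthogonal they are supported on the same pair `{p, r}`, with opposite signs at `r`, so
`(w, β) + (w, γ)` is even for every `w`. The trivalent node of an `E` diagram has three pairwise
orthogonal neighbours, and every two of them are told apart by a simple root joined to one and
orthogonal to the other, contradicting that parity.
-/

section TypeTwo

variable {n m : ℕ} {v : Fin m → Fin n → ℤ}

lemma formV_comm (a b : Fin n → ℤ) : formV v a b = formV v b a := by
  simp only [formV, mul_comm]

lemma formV_eq_of_support {a : Fin n → ℤ} {p q : Fin m} (hpq : p ≠ q)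
    (h0 : ∀ k, k ≠ p → k ≠ q → pairZ a (v k) = 0) (b : Fin n → ℤ) :
    formV v a b = pairZ a (v p) * pairZ b (v p) + pairZ a (v q) * pairZ b (v q) := by
  rw [formV, ← sum_subset (subset_univ {p, q}) fun k _ hk => ?_, sum_pair hpq]
  simp only [mem_insert, mem_singleton, not_or] at hk
  rw [h0 k hk.1 hk.2, zero_mul]

namespace IsType2

variable {a : Fin n → ℤ}

lemma pairZ_mem (ha : IsType2 v a) (k : Fin m) :
    pairZ a (v k) = 1 ∨ pairZ a (v k) = -1 ∨ pairZ a (v k) = 0 := by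
  obtain ⟨i, j, -, hi, hj, h0⟩ := ha
  by_cases hki : k = i
  · subst hki; tauto
  by_cases hkj : k = j
  · subst hkj; tauto
  · exact Or.inr (Or.inr (h0 k hki hkj))

lemma exists_support_of_ne_zero (ha : IsType2 v a) {p : Fin m} (hp : pairZ a (v p) ≠ 0) :
    ∃ r, r ≠ p ∧ ∀ k, k ≠ p → k ≠ r → pairZ a (v k) = 0 := by
  obtain ⟨i, j, hij, -, -, h0⟩ := ha
  by_cases hpi : p = i
  · subst hpi
    exact ⟨j, Ne.symm hij, h0⟩
  by_cases hpj : p = j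
  · subst hpj
    exact ⟨i, hij, fun k hk1 hk2 => h0 k hk2 hk1⟩
  · exact absurd (h0 p hpi hpj) hp

lemma pairZ_eq_neg_of_formV_eq_neg_one {α : Fin n → ℤ} {p q : Fin m} (hpq : p ≠ q)
    (hp : pairZ α (v p) = 1 ∨ pairZ α (v p) = -1) (hq : pairZ α (v q) = 1 ∨ pairZ α (v q) = -1)
    (h0 : ∀ k, k ≠ p → k ≠ q → pairZ α (v k) = 0) (ha : IsType2 v a) (hαa : formV v α a = -1) :
    pairZ a (v p) = -pairZ α (v p) ∨ pairZ a (v q) = -pairZ α (v q) := by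
  rw [formV_eq_of_support hpq h0] at hαa
  rcases ha.pairZ_mem p with hap | hap | hap <;> rcases ha.pairZ_mem q with haq | haq | haq <;>
    rcases hp with hp | hp <;> rcases hq with hq | hq <;> simp_all

/-- The pair is `ε e_p* + δ e_r*`, `ε e_p* - δ e_r*` for some `r` and signs `ε, δ`. -/
lemma formV_add_of_conjugate {β γ : Fin n → ℤ} (hβ : IsType2 v β) (hγ : IsType2 v γ)
    (hβγ : formV v β γ = 0) {p : Fin m} (hp : pairZ β (v p) ≠ 0)
    (hβγp : pairZ γ (v p) = pairZ β (v p)) (w : Fin n → ℤ) :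
    formV v w β + formV v w γ = 2 * (pairZ β (v p) * pairZ w (v p)) := by
  obtain ⟨r, hrp, hβ0⟩ := hβ.exists_support_of_ne_zero hp
  obtain ⟨s, hsp, hγ0⟩ := hγ.exists_support_of_ne_zero (hβγp ▸ hp)
  rw [formV_eq_of_support hrp.symm hβ0, hβγp] at hβγ
  have hγr : pairZ γ (v r) = -pairZ β (v r) := by
    rcases hβ.pairZ_mem p with h | h | h <;> rcases hβ.pairZ_mem r with h' | h' | h' <;>
      rcases hγ.pairZ_mem r with h'' | h'' | h'' <;> simp_all
  have hrs : r = s := by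
    by_contra hrs
    rcases hβ.pairZ_mem r with h | h | h <;> simp_all
  subst hrs
  rw [formV_comm, formV_comm w, formV_eq_of_support hrp.symm hβ0,
    formV_eq_of_support hrp.symm hγ0, hβγp, hγr]
  ring

end IsType2

lemma exists_conjugate_of_three_neighbors {α : Fin n → ℤ} {β : Fin 3 → Fin n → ℤ}
    (hα : IsType2 v α) (hβ : ∀ i, IsType2 v (β i)) (hαβ : ∀ i, formV v α (β i) = -1)
    (horth : ∀ i j, i ≠ j → formV v (β i) (β j) = 0) :
    ∃ i j, i ≠ j ∧ ∀ w, Even (formV v w (β i) + formV v w (β j)) := by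
  obtain ⟨p, q, hpq, hp, hq, h0⟩ := hα
  have hnb i := (hβ i).pairZ_eq_neg_of_formV_eq_neg_one hpq hp hq h0 (hαβ i)
  obtain ⟨i, j, hij, hsame⟩ := Fintype.exists_ne_map_eq_of_card_lt
    (fun i => decide (pairZ (β i) (v p) = -pairZ α (v p))) (by simp)
  obtain ⟨t, ht, hij_t⟩ : ∃ t, pairZ (β i) (v t) ≠ 0 ∧ pairZ (β j) (v t) = pairZ (β i) (v t) := by
    by_cases hi : pairZ (β i) (v p) = -pairZ α (v p)
    · have hj : pairZ (β j) (v p) = -pairZ α (v p) := by simpa [hi] using hsame.symm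
      exact ⟨p, by omega, by omega⟩
    · have hj : ¬pairZ (β j) (v p) = -pairZ α (v p) := by simpa [hi] using hsame.symm
      have hi' := (hnb i).resolve_left hi
      have hj' := (hnb j).resolve_left hj
      exact ⟨q, by omega, by omega⟩
  refine ⟨i, j, hij, fun w => ?_⟩
  rw [(hβ i).formV_add_of_conjugate (hβ j) (horth i j hij) ht hij_t]
  exact even_two_mul _

lemma not_matchesGram_of_trivalent {Δ : Finset (Fin n → ℤ)} (hΔ : ∀ a ∈ Δ, IsType2 v a)
    {ℓ : ℕ} {g : Fin ℓ → Fin ℓ → ℤ} (c : Fin ℓ) (b : Fin 3 → Fin ℓ)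
    (hcb : ∀ i, g c (b i) = -1) (horth : ∀ i j, i ≠ j → g (b i) (b j) = 0)
    (hsep : ∀ i j, i < j → ∃ w, g w (b i) = -1 ∧ g w (b j) = 0) :
    ¬MatchesGram v Δ ℓ g := by
  rintro ⟨e, -, he, -, hg⟩
  obtain ⟨i, j, hij, hconj⟩ := exists_conjugate_of_three_neighbors (hΔ _ (he c))
    (fun i => hΔ _ (he (b i))) (fun i => (hg _ _).trans (hcb i))
    (fun i j h => (hg _ _).trans (horth i j h))
  wlog hlt : i < j generalizing i j
  · exact this j i hij.symm (fun w => add_comm (formV v w (e (b i))) _ ▸ hconj w)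
      (hij.symm.lt_of_le (not_lt.mp hlt))
  obtain ⟨w, hwi, hwj⟩ := hsep i j hlt
  have hparity := hconj (e w)
  rw [hg, hg, hwi, hwj] at hparity
  exact absurd hparity (by decide)

end TypeTwo

theorem stmt12_general {n m : ℕ} (v : Fin m → Fin n → ℤ)
    (Δ : Finset (Fin n → ℤ))
    (hlong : ∀ a ∈ Δ, IsType2 v a) :
    ¬ IsTypeE v Δ := by
  rintro ⟨ℓ, hℓ, hE⟩
  rcases hℓ with rfl | rfl | rfl <;>
    exact not_matchesGram_of_trivalent hlong 2 ![1, 3, Fin.last _] (by decide) (by decide)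
      (by decide) hE

/-- An irreducible subsystem of `R(V)` all of whose simple roots are of type 2 is
not of type E. -/
theorem stmt12 {n m : ℕ} (v : Fin m → Fin n → ℤ)
    (hv : Module.finrank ℤ (Submodule.span ℤ (Set.range v)) = n)
    (Φ : Set (Fin n → ℤ)) (Δ : Finset (Fin n → ℤ))
    (hsub : IsRootSubsystem v (RV v) Φ) (hbase : IsBase v Φ Δ)
    (hirr : IsIrred v Φ)
    (hlong : ∀ a ∈ Δ, IsType2 v a) :
    ¬ IsTypeE v Δ :=
  stmt12_general v Δ hlong
end

section
/- Let {v_i}_{i=1}^m ⊆ ℤ^n span a full-rank subgroup, equip (ℤ^n)* with the form (α,β) = Σ_i ⟨α,v_i⟩⟨β,v_i⟩, and let α ∈ (ℤ^n)* satisfy: ⟨α, v_i⟩ ≠ 0 for a single index i and ⟨α, v_k⟩ = 0 for k ≠ i, with the reflection ρ_α acting on {v_k} by ρ_{α*}(v_i) = −v_i and ρ_{α*}(v_k) = v_k for k ≠ i. Then for all β ∈ (ℤ^n)*, the functional ρ_α*(β) := β ∘ ρ_{α*} equals β − (2(β,α)/(α,α))·α. -/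
open Finset

/-! Since `α` pairs nontrivially only with `v_i`, `(β,α)/(α,α) = ⟨β,v_i⟩/⟨α,v_i⟩`. After clearing
this denominator, both sides are linear functionals of `x` that visibly agree on every `v_k`, and
two functionals agreeing on a full-rank sublattice agree everywhere, the quotient by it being
torsion. -/

theorem LinearMap.ext_of_finrank_span_eq {R M N : Type*} [CommRing R] [IsDomain R]
    [AddCommGroup M] [Module R M] [Module.Finite R M] [AddCommGroup N] [Module R N]
    [Module.IsTorsionFree R N] {s : Set M} (hs : Module.finrank R (Submodule.span R s) =
      Module.finrank R M) {f g : M →ₗ[R] N} (h : ∀ x ∈ s, f x = g x) : f = g := by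
  have htorsion : Module.finrank R (M ⧸ Submodule.span R s) = 0 := by
    rw [Submodule.finrank_quotient, hs, Nat.sub_self]
  have hspan : Submodule.span R s ≤ LinearMap.ker (f - g) :=
    Submodule.span_le.mpr fun x hx => sub_eq_zero.mpr (h x hx)
  ext x
  obtain ⟨c, hc, hcx⟩ := Module.finrank_eq_zero_iff.mp htorsion (Submodule.Quotient.mk x)
  rw [← Submodule.Quotient.mk_smul, Submodule.Quotient.mk_eq_zero] at hcx
  have hker : c • (f - g) x = 0 := by rw [← map_smul]; exact hspan hcx
  exact sub_eq_zero.mp ((smul_eq_zero.mp hker).resolve_left hc)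

theorem pairZ_eq_dotProductBilin {n : ℕ} (a x : Fin n → ℤ) :
    pairZ a x = dotProductBilin ℤ ℤ a x :=
  rfl

theorem formV_eq_of_pairZ_eq_zero {n m : ℕ} {v : Fin m → Fin n → ℤ} {i : Fin m}
    {a : Fin n → ℤ} (hak : ∀ k, k ≠ i → pairZ a (v k) = 0) (b : Fin n → ℤ) :
    formV v b a = pairZ b (v i) * pairZ a (v i) :=
  Finset.sum_eq_single_of_mem i (Finset.mem_univ i) fun k _ hk => by rw [hak k hk, mul_zero]

theorem pairZ_mul_pairZ_apply_eq {n m : ℕ} {v : Fin m → Fin n → ℤ}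
    (hv : Module.finrank ℤ (Submodule.span ℤ (Set.range v)) = n)
    {g : (Fin n → ℤ) →ₗ[ℤ] (Fin n → ℤ)} {i : Fin m}
    (hgi : g (v i) = -(v i)) (hgk : ∀ k, k ≠ i → g (v k) = v k)
    {a : Fin n → ℤ} (hak : ∀ k, k ≠ i → pairZ a (v k) = 0) (b x : Fin n → ℤ) :
    pairZ a (v i) * pairZ b (g x) = pairZ a (v i) * pairZ b x - 2 * pairZ b (v i) * pairZ a x := by
  let L : (Fin n → ℤ) →ₗ[ℤ] (Fin n → ℤ) →ₗ[ℤ] ℤ := dotProductBilin ℤ ℤ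
  have hext : pairZ a (v i) • (L b).comp g = pairZ a (v i) • L b - (2 * pairZ b (v i)) • L a := by
    refine LinearMap.ext_of_finrank_span_eq (s := Set.range v)
      (by rw [hv, Module.finrank_fin_fun]) ?_
    rintro _ ⟨k, rfl⟩
    by_cases hk : k = i
    · subst hk
      simp only [LinearMap.smul_apply, LinearMap.comp_apply, LinearMap.sub_apply, smul_eq_mul,
        hgi, map_neg, L, ← pairZ_eq_dotProductBilin]
      ring
    · simp only [LinearMap.smul_apply, LinearMap.comp_apply, LinearMap.sub_apply, smul_eq_mul,
        hgk k hk, L, ← pairZ_eq_dotProductBilin, hak k hk]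
      ring
  simpa only [LinearMap.smul_apply, LinearMap.comp_apply, LinearMap.sub_apply, smul_eq_mul,
      L, ← pairZ_eq_dotProductBilin] using LinearMap.congr_fun hext x

/-- Lemma 4.2 (type 1 case): if `α` pairs nontrivially with `v_i` only, and the
reflection `g` satisfies `g(v_i) = −v_i`, `g(v_k) = v_k` for `k ≠ i`, then for any
`β` the functional `β ∘ g` equals `β − (2(β,α)/(α,α))·α`. -/
theorem stmt19 {n m : ℕ} (v : Fin m → Fin n → ℤ)
    (hv : Module.finrank ℤ (Submodule.span ℤ (Set.range v)) = n)
    (g : (Fin n → ℤ) →ₗ[ℤ] (Fin n → ℤ)) (i : Fin m)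
    (hgi : g (v i) = -(v i)) (hgk : ∀ k, k ≠ i → g (v k) = v k)
    (a : Fin n → ℤ)
    (hai : pairZ a (v i) ≠ 0) (hak : ∀ k, k ≠ i → pairZ a (v k) = 0) :
    ∀ b x : Fin n → ℤ,
      (pairZ b (g x) : ℚ) =
        (pairZ b x : ℚ) - (2 * formV v b a : ℚ) / (formV v a a : ℚ) * (pairZ a x : ℚ) := by
  intro b x
  have hai' : (pairZ a (v i) : ℚ) ≠ 0 := by exact_mod_cast hai
  have key : (pairZ a (v i) * pairZ b (g x) : ℚ) =
      pairZ a (v i) * pairZ b x - 2 * pairZ b (v i) * pairZ a x := by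
    exact_mod_cast pairZ_mul_pairZ_apply_eq hv hgi hgk hak b x
  rw [formV_eq_of_pairZ_eq_zero hak, formV_eq_of_pairZ_eq_zero hak]
  push_cast
  field_simp
  linear_combination key
end
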